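/- Let p be an odd prime not dividing m₁m₂m₃, and suppose the Legendre symbol conditions (m₁m₂/p) = (m₂m₃/p) = (m₃m₁/p) = 1 fail (i.e. at least one of these symbols is not 1). Then the exponential sum S_p(m,n) = Σ_{a∈𝔽_p^×} Σ_{x,y∈𝔽_p³} e_p(a(x₁y₁²+x₂y₂²+x₃y₃²) + m·x + n·y) vanishes. -/

import Mathlib

/-- e_q(t) = exp(2πit/q). -/
noncomputable def eChar (q : ℕ) (t : ℤ) : ℂ :=
  Complex.exp (2 * Real.pi * Complex.I * (t : ℂ) / (q : ℂ))

/-- The complete exponential sum S_q(m,n) for F(x,y) = x₁y₁² + x₂y₂² + x₃y₃²: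
S_q(m,n) = Σ*_{a mod q} Σ_{x,y mod q} e_q(aF(x,y) + m·x + n·y). -/
noncomputable def expSum (q : ℕ) (m₁ m₂ m₃ n₁ n₂ n₃ : ℤ) : ℂ :=
  ∑ a ∈ (Finset.range q).filter (fun a => Nat.Coprime a q),
    ∑ x₁ ∈ Finset.range q, ∑ x₂ ∈ Finset.range q, ∑ x₃ ∈ Finset.range q,
      ∑ y₁ ∈ Finset.range q, ∑ y₂ ∈ Finset.range q, ∑ y₃ ∈ Finset.range q,
        eChar q ((a : ℤ) * ((x₁ : ℤ) * (y₁ : ℤ) ^ 2 + (x₂ : ℤ) * (y₂ : ℤ) ^ 2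
            + (x₃ : ℤ) * (y₃ : ℤ) ^ 2)
          + m₁ * (x₁ : ℤ) + m₂ * (x₂ : ℤ) + m₃ * (x₃ : ℤ)
          + n₁ * (y₁ : ℤ) + n₂ * (y₂ : ℤ) + n₃ * (y₃ : ℤ))

/-!
For fixed `a`, the summand of `S_p(m,n)` is a product of three factors, the `i`-th depending only
on `(xᵢ, yᵢ)`, so the inner sum is a product of three sums `∑_{x,y} e_p(a x y² + mᵢ x + nᵢ y)`.
Summing over `x` first, such a sum vanishes unless `a y² + mᵢ ≡ 0 (mod p)` for some `y`.
If all three factors were nonzero, each `mᵢ ≡ -a yᵢ²`, so every `mᵢ mⱼ ≡ (a yᵢ yⱼ)²` would be a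
nonzero square and all three Legendre symbols would be `1`.
-/

open Finset

lemma eChar_eq_zpow (q : ℕ) (t : ℤ) :
    eChar q t = Complex.exp (2 * Real.pi * Complex.I / q) ^ t := by
  rw [← Complex.exp_int_mul, eChar]
  ring_nf

lemma eChar_add (q : ℕ) (s t : ℤ) : eChar q (s + t) = eChar q s * eChar q t := by
  simp only [eChar_eq_zpow, zpow_add₀ (Complex.exp_ne_zero _)]

lemma sum_range_eChar_mul_add_eq_zero {q : ℕ} (hq : q ≠ 0) {c : ℤ} (hc : ¬ (q : ℤ) ∣ c) (d : ℤ) :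
    ∑ x ∈ range q, eChar q (c * x + d) = 0 := by
  have hζ := Complex.isPrimitiveRoot_exp q hq
  set ζ := Complex.exp (2 * Real.pi * Complex.I / q)
  have hw : ζ ^ c ≠ 1 := (hζ.zpow_eq_one_iff_dvd c).not.mpr hc
  have hwq : (ζ ^ c) ^ q = 1 := by
    rw [← zpow_natCast, ← zpow_mul, mul_comm, zpow_mul, hζ.zpow_eq_one, one_zpow]
  calc ∑ x ∈ range q, eChar q (c * x + d)
      = (∑ x ∈ range q, (ζ ^ c) ^ x) * ζ ^ d := by
        simp only [sum_mul, eChar_eq_zpow, ← zpow_natCast, ← zpow_mul,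
          zpow_add₀ (Complex.exp_ne_zero _)]
        rfl
    _ = 0 := by rw [geom_sum_eq hw, hwq, sub_self, zero_div, zero_mul]

noncomputable def expSumFactor (q : ℕ) (a m n : ℤ) : ℂ :=
  ∑ x ∈ range q, ∑ y ∈ range q, eChar q (a * x * y ^ 2 + m * x + n * y)

lemma exists_dvd_of_expSumFactor_ne_zero {q : ℕ} (hq : q ≠ 0) {a m n : ℤ}
    (h : expSumFactor q a m n ≠ 0) : ∃ y : ℤ, (q : ℤ) ∣ a * y ^ 2 + m := by
  contrapose! h
  rw [expSumFactor, sum_comm]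
  refine sum_eq_zero fun y _ => ?_
  refine (sum_congr rfl fun x _ => congrArg _ ?_).trans
    (sum_range_eChar_mul_add_eq_zero hq (h y) (n * y))
  ring

lemma expSum_eq_sum_mul_expSumFactor (q : ℕ) (m₁ m₂ m₃ n₁ n₂ n₃ : ℤ) :
    expSum q m₁ m₂ m₃ n₁ n₂ n₃ = ∑ a ∈ (range q).filter (fun a => Nat.Coprime a q),
      expSumFactor q a m₁ n₁ * expSumFactor q a m₂ n₂ * expSumFactor q a m₃ n₃ := by
  refine sum_congr rfl fun a _ => ?_
  calc _ = ∑ x₁ ∈ range q, ∑ x₂ ∈ range q, ∑ x₃ ∈ range q,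
        ∑ y₁ ∈ range q, ∑ y₂ ∈ range q, ∑ y₃ ∈ range q,
          eChar q (a * x₁ * y₁ ^ 2 + m₁ * x₁ + n₁ * y₁) *
            eChar q (a * x₂ * y₂ ^ 2 + m₂ * x₂ + n₂ * y₂) *
              eChar q (a * x₃ * y₃ ^ 2 + m₃ * x₃ + n₃ * y₃) := by
        simp only [← eChar_add]
        congr! 7
        ring
    _ = _ := by simp only [expSumFactor, ← mul_sum, ← sum_mul]

lemma legendreSym_mul_eq_one_of_dvd_mul_sq_add {p : ℕ} [Fact p.Prime] {a mᵢ mⱼ yᵢ yⱼ : ℤ}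
    (hmᵢ : (mᵢ : ZMod p) ≠ 0) (hmⱼ : (mⱼ : ZMod p) ≠ 0)
    (hyᵢ : (p : ℤ) ∣ a * yᵢ ^ 2 + mᵢ) (hyⱼ : (p : ℤ) ∣ a * yⱼ ^ 2 + mⱼ) :
    legendreSym p (mᵢ * mⱼ) = 1 := by
  rw [legendreSym.eq_one_iff p (by push_cast; exact mul_ne_zero hmᵢ hmⱼ)]
  rw [← ZMod.intCast_zmod_eq_zero_iff_dvd] at hyᵢ hyⱼ
  push_cast at hyᵢ hyⱼ ⊢
  exact ⟨a * yᵢ * yⱼ, by linear_combination (mⱼ : ZMod p) * hyᵢ - a * yᵢ ^ 2 * hyⱼ⟩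

theorem stmt12_general (p : ℕ) [hp : Fact p.Prime]
    (m₁ m₂ m₃ n₁ n₂ n₃ : ℤ) (hm : ¬ (p : ℤ) ∣ m₁ * m₂ * m₃)
    (hleg : ¬ (legendreSym p (m₁ * m₂) = 1 ∧ legendreSym p (m₂ * m₃) = 1 ∧
      legendreSym p (m₃ * m₁) = 1)) :
    expSum p m₁ m₂ m₃ n₁ n₂ n₃ = 0 := by
  have hp0 : p ≠ 0 := hp.out.ne_zero
  obtain ⟨⟨h₁, h₂⟩, h₃⟩ : ((m₁ : ZMod p) ≠ 0 ∧ (m₂ : ZMod p) ≠ 0) ∧ (m₃ : ZMod p) ≠ 0 := by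
    simpa only [← ZMod.intCast_zmod_eq_zero_iff_dvd, Int.cast_mul, mul_ne_zero_iff] using hm
  rw [expSum_eq_sum_mul_expSumFactor]
  refine sum_eq_zero fun a _ => ?_
  by_contra hne
  obtain ⟨⟨hne₁, hne₂⟩, hne₃⟩ := mul_ne_zero_iff.mp hne |>.imp_left mul_ne_zero_iff.mp
  obtain ⟨y₁, hy₁⟩ := exists_dvd_of_expSumFactor_ne_zero hp0 hne₁
  obtain ⟨y₂, hy₂⟩ := exists_dvd_of_expSumFactor_ne_zero hp0 hne₂
  obtain ⟨y₃, hy₃⟩ := exists_dvd_of_expSumFactor_ne_zero hp0 hne₃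
  exact hleg ⟨legendreSym_mul_eq_one_of_dvd_mul_sq_add h₁ h₂ hy₁ hy₂,
    legendreSym_mul_eq_one_of_dvd_mul_sq_add h₂ h₃ hy₂ hy₃,
    legendreSym_mul_eq_one_of_dvd_mul_sq_add h₃ h₁ hy₃ hy₁⟩

/-- If p is an odd prime, p ∤ m₁m₂m₃, and the Legendre symbol conditions
(m₁m₂/p) = (m₂m₃/p) = (m₃m₁/p) = 1 fail, then S_p(m,n) = 0. -/
theorem stmt12 (p : ℕ) [hp : Fact p.Prime] (hp2 : p ≠ 2)
    (m₁ m₂ m₃ n₁ n₂ n₃ : ℤ) (hm : ¬ (p : ℤ) ∣ m₁ * m₂ * m₃)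
    (hleg : ¬ (legendreSym p (m₁ * m₂) = 1 ∧ legendreSym p (m₂ * m₃) = 1 ∧
      legendreSym p (m₃ * m₁) = 1)) :
    expSum p m₁ m₂ m₃ n₁ n₂ n₃ = 0 :=
  stmt12_general p (hp := hp) m₁ m₂ m₃ n₁ n₂ n₃ hm hleg
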